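/- arXiv:1203.3133 — 3 statements merged into one kernel-verified Lean document; each statement's English description precedes it below -/
import Mathlib

section
/- For real A and B with B > 0, the improper integral ∫_0^∞ (e^{−Bx}/x) · sin(Ax) dx equals arctan(A/B). -/
/-!
For `x ≠ 0`, `sin (A x) / x = ∫₀^A cos (t x) dt`, so by Fubini on the rectangle `[0, T] × [0, A]`
the truncated integral is `∫₀^A ∫₀^T e^{-Bx} cos (t x) dx dt`. The inner integral has the explicit
value `B / (B² + t²)` plus a boundary term bounded by `e^{-BT} / B` uniformly in `t`, and
`∫₀^A B / (B² + t²) dt = arctan (A / B)`.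
-/

open Real MeasureTheory Filter Set intervalIntegral Topology
open scoped Interval

noncomputable def expCosPrimitive (B t x : ℝ) : ℝ :=
  exp (-B * x) * (t * sin (t * x) - B * cos (t * x)) / (B ^ 2 + t ^ 2)

section
variable {B : ℝ}

theorem continuous_expCosPrimitive_left (hB : B ≠ 0) (x : ℝ) :
    Continuous fun t => expCosPrimitive B t x := by
  unfold expCosPrimitive
  fun_prop (disch := intro; positivity)

theorem hasDerivAt_expCosPrimitive (hB : B ≠ 0) (t x : ℝ) :
    HasDerivAt (expCosPrimitive B t) (exp (-B * x) * cos (t * x)) x := by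
  have hD : B ^ 2 + t ^ 2 ≠ 0 := by positivity
  have hexp : HasDerivAt (fun x => exp (-B * x)) (exp (-B * x) * -B) x :=
    ((hasDerivAt_id x).const_mul (-B)).exp.congr_deriv (by simp)
  have hsin : HasDerivAt (fun x => sin (t * x)) (cos (t * x) * t) x :=
    ((hasDerivAt_id x).const_mul t).sin.congr_deriv (by simp)
  have hcos : HasDerivAt (fun x => cos (t * x)) (-sin (t * x) * t) x :=
    ((hasDerivAt_id x).const_mul t).cos.congr_deriv (by simp)
  refine ((hexp.mul ((hsin.const_mul t).sub (hcos.const_mul B))).div_const _).congr_deriv ?_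
  simp only [Pi.sub_apply]
  field_simp
  ring

theorem integral_exp_mul_cos (hB : B ≠ 0) (t T : ℝ) :
    ∫ x in 0..T, exp (-B * x) * cos (t * x) = B / (B ^ 2 + t ^ 2) + expCosPrimitive B t T := by
  rw [integral_eq_sub_of_hasDerivAt (fun x _ => hasDerivAt_expCosPrimitive hB t x)
    ((by fun_prop : Continuous _).intervalIntegrable _ _)]
  simp [expCosPrimitive]
  ring

theorem abs_expCosPrimitive_le (hB : 0 < B) (t x : ℝ) :
    |expCosPrimitive B t x| ≤ exp (-B * x) / B := by
  have hD : 0 < B ^ 2 + t ^ 2 := by positivity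
  -- Cauchy–Schwarz: `(t sin θ - B cos θ)² ≤ (t² + B²)(sin² θ + cos² θ)`.
  have hCS : (t * sin (t * x) - B * cos (t * x)) ^ 2 ≤ B ^ 2 + t ^ 2 := by
    nlinarith [sq_nonneg (t * cos (t * x) + B * sin (t * x)), sin_sq_add_cos_sq (t * x)]
  have hN : |t * sin (t * x) - B * cos (t * x)| * B ≤ B ^ 2 + t ^ 2 := by
    rw [← sq_le_sq₀ (by positivity) hD.le, mul_pow, sq_abs]
    nlinarith [sq_nonneg t]
  rw [expCosPrimitive, abs_div, abs_mul, abs_of_pos (exp_pos _), abs_of_pos hD,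
    div_le_div_iff₀ hD hB, mul_assoc]
  exact mul_le_mul_of_nonneg_left hN (exp_pos _).le

theorem tendsto_integral_expCosPrimitive (hB : 0 < B) (A : ℝ) :
    Tendsto (fun T => ∫ t in 0..A, expCosPrimitive B t T) atTop (𝓝 0) := by
  have hexp : Tendsto (fun T => exp (-B * T) / B * |A - 0|) atTop (𝓝 0) := by
    simpa using ((tendsto_exp_atBot.comp
      (tendsto_id.const_mul_atTop_of_neg (neg_lt_zero.2 hB))).div_const B).mul_const |A - 0|
  refine squeeze_zero_norm (fun T => norm_integral_le_of_norm_le_const fun t _ => ?_) hexp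
  exact abs_expCosPrimitive_le hB t T

end

theorem integral_cos_mul {x : ℝ} (hx : x ≠ 0) (A : ℝ) :
    ∫ t in 0..A, cos (t * x) = sin (A * x) / x := by
  rw [intervalIntegral.integral_comp_mul_right cos hx, integral_cos]
  simp [div_eq_inv_mul]

theorem integral_exp_div_mul_sin_eq_integral_integral (A B T : ℝ) :
    ∫ x in 0..T, exp (-B * x) / x * sin (A * x) =
      ∫ t in 0..A, ∫ x in 0..T, exp (-B * x) * cos (t * x) := by
  have hpt : ∀ᵐ x, x ∈ Ι 0 T →
      exp (-B * x) / x * sin (A * x) = ∫ t in 0..A, exp (-B * x) * cos (t * x) := by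
    filter_upwards [volume.ae_ne 0] with x hx _
    rw [intervalIntegral.integral_const_mul, integral_cos_mul hx]
    ring
  rw [integral_congr_ae hpt]
  refine intervalIntegral_intervalIntegral_swap ?_
  exact ((by fun_prop : Continuous _).continuousOn.integrableOn_compact
    (isCompact_uIcc.prod isCompact_uIcc)).mono_set (prod_mono uIoc_subset_uIcc uIoc_subset_uIcc)

theorem integral_exp_div_mul_sin (A B : ℝ) (hB : 0 < B) :
    Tendsto (fun T : ℝ => ∫ x in (0:ℝ)..T, Real.exp (-B * x) / x * Real.sin (A * x))
      atTop (nhds (Real.arctan (A / B))) := by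
  have hsplit (T : ℝ) : ∫ x in 0..T, exp (-B * x) / x * sin (A * x) =
      arctan (A / B) + ∫ t in 0..A, expCosPrimitive B t T := by
    rw [integral_exp_div_mul_sin_eq_integral_integral,
      integral_congr fun t _ => integral_exp_mul_cos hB.ne' t T,
      integral_add ((by fun_prop (disch := intro; positivity) :
          Continuous fun t : ℝ => B / (B ^ 2 + t ^ 2)).intervalIntegrable _ _)
        ((continuous_expCosPrimitive_left hB.ne' T).intervalIntegrable _ _),
      integral_div_sq_add_sq]
    simp
  simp_rw [hsplit]
  simpa using tendsto_const_nhds.add (tendsto_integral_expCosPrimitive hB A)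
end

section
/- For every n ≥ 1 and t > 0, with a_n = cos(π/(2(2n+1))) and b_n = sin(π/(2(2n+1))), the quantity ∫_0^∞ (1/(πx)) [∫_0^∞ e^{−b_n x w} sin(a_n x w) · (2n+1) t w^{2n} e^{−t w^{2n+1}} dw] dx equals (1/2)(1 − 1/(2n+1)). -/
/-!
Put `θ = π / (2 (2n + 1))`, `a = cos θ`, `b = sin θ`. The absolute integral over `x` of
`e^{-bxw} sin(axw) / x` does not depend on `w > 0` (substitute `x ↦ x / w`), so Fubini applies
against any integrable `ρ(w)`. Integrating in `x` first gives the classical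
`∫₀^∞ e^{-bx} sin(ax) / x dx = arctan (a / b) = π / 2 - θ`, and the generalized gamma
density integrates to `1`, so the mass is `(π / 2 - θ) / π = (1 - 1 / (2n + 1)) / 2`.
-/
open Real MeasureTheory Set Filter

theorem integral_exp_neg_mul_mul_cos_Ioi {b : ℝ} (hb : 0 < b) (a : ℝ) :
    ∫ x in Ioi 0, exp (-b * x) * cos (a * x) = b / (a ^ 2 + b ^ 2) := by
  set z : ℂ := -b + a * Complex.I
  have hz : z.re < 0 := by simpa [z] using hb
  have hre (x : ℝ) : exp (-b * x) * cos (a * x) = RCLike.re (Complex.exp (z * x)) := by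
    simp [Complex.exp_re, z]
  simp_rw [hre]
  rw [integral_re (integrableOn_exp_mul_complex_Ioi hz 0), integral_exp_mul_complex_Ioi hz]
  simp [z, Complex.div_re, Complex.normSq_apply]
  field_simp
  ring

theorem integrableOn_exp_neg_mul_mul_sin_div_Ioi {b : ℝ} (hb : 0 < b) (a : ℝ) :
    IntegrableOn (fun x => exp (-b * x) * sin (a * x) / x) (Ioi 0) := by
  refine ((exp_neg_integrableOn_Ioi 0 hb).const_mul |a|).mono'
    (by fun_prop : Measurable _).aestronglyMeasurable ?_
  filter_upwards [ae_restrict_mem measurableSet_Ioi] with x (hx : 0 < x)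
  have hsin : ‖sin (a * x)‖ ≤ |a| * x :=
    abs_sin_le_abs.trans_eq (by rw [abs_mul, abs_of_pos hx])
  rw [norm_div, norm_mul, norm_of_nonneg (exp_pos _).le, norm_of_nonneg hx.le, div_le_iff₀ hx]
  calc exp (-b * x) * ‖sin (a * x)‖ ≤ exp (-b * x) * (|a| * x) := by gcongr
    _ = |a| * exp (-b * x) * x := by ring

theorem integral_exp_neg_mul_mul_sin_div_Ioi {b : ℝ} (hb : 0 < b) (a : ℝ) :
    ∫ x in Ioi 0, exp (-b * x) * sin (a * x) / x = arctan (a / b) := by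
  -- both sides vanish at `a = 0` and have derivative `b / (a ^ 2 + b ^ 2)` in `a`
  have hF (c : ℝ) : HasDerivAt (fun c => ∫ x in Ioi 0, exp (-b * x) * sin (c * x) / x)
      (b / (c ^ 2 + b ^ 2)) c := by
    rw [← integral_exp_neg_mul_mul_cos_Ioi hb c]
    refine (hasDerivAt_integral_of_dominated_loc_of_deriv_le
      (F := fun c x => exp (-b * x) * sin (c * x) / x) (F' := fun c x => exp (-b * x) * cos (c * x))
      (μ := volume.restrict (Ioi 0)) (bound := fun x => exp (-b * x)) univ_mem
      (.of_forall fun _ => (by fun_prop : Measurable _).aestronglyMeasurable)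
      (integrableOn_exp_neg_mul_mul_sin_div_Ioi hb c) (by fun_prop) ?_
      (exp_neg_integrableOn_Ioi 0 hb) ?_).2
    · refine .of_forall fun x c' _ => ?_
      rw [norm_mul, norm_of_nonneg (exp_pos _).le]
      exact mul_le_of_le_one_right (exp_pos _).le (abs_cos_le_one _)
    · filter_upwards [ae_restrict_mem measurableSet_Ioi] with x (hx : 0 < x) c' _
      exact (((hasDerivAt_mul_const x).sin.const_mul _).div_const x).congr_deriv (by field_simp)
  have hA (c : ℝ) : HasDerivAt (fun c => arctan (c / b)) (b / (c ^ 2 + b ^ 2)) c := by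
    convert ((hasDerivAt_id' c).div_const b).arctan using 1
    field_simp
    ring
  have := eq_of_fderiv_eq (fun c => (hF c).differentiableAt) (fun c => (hA c).differentiableAt)
    (fun c => (hF c).hasFDerivAt.fderiv.trans (hA c).hasFDerivAt.fderiv.symm) 0 (by simp)
  exact congrFun this a

theorem hasDerivAt_neg_exp_neg_mul_pow_succ (k : ℕ) (t w : ℝ) :
    HasDerivAt (fun w => -exp (-t * w ^ (k + 1)))
      ((k + 1) * t * w ^ k * exp (-t * w ^ (k + 1))) w := by
  refine (((hasDerivAt_pow (k + 1) w).const_mul (-t)).exp.neg).congr_deriv ?_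
  push_cast
  ring

theorem tendsto_neg_exp_neg_mul_pow_succ_atTop (k : ℕ) {t : ℝ} (ht : 0 < t) :
    Tendsto (fun w : ℝ => -exp (-t * w ^ (k + 1))) atTop (nhds 0) := by
  simpa using (tendsto_exp_atBot.comp <|
    (tendsto_pow_atTop k.succ_ne_zero).const_mul_atTop_of_neg (neg_lt_zero.2 ht)).neg

theorem integrableOn_succ_mul_pow_mul_exp_neg_mul_pow_succ (k : ℕ) {t : ℝ} (ht : 0 < t) :
    IntegrableOn (fun w => (k + 1) * t * w ^ k * exp (-t * w ^ (k + 1))) (Ioi 0) :=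
  integrableOn_Ioi_deriv_of_nonneg' (fun w _ => hasDerivAt_neg_exp_neg_mul_pow_succ k t w)
    (fun w (hw : 0 < w) => by positivity) (tendsto_neg_exp_neg_mul_pow_succ_atTop k ht)

theorem integral_succ_mul_pow_mul_exp_neg_mul_pow_succ (k : ℕ) {t : ℝ} (ht : 0 < t) :
    ∫ w in Ioi 0, (k + 1) * t * w ^ k * exp (-t * w ^ (k + 1)) = 1 := by
  rw [integral_Ioi_of_hasDerivAt_of_nonneg' (fun w _ => hasDerivAt_neg_exp_neg_mul_pow_succ k t w)
    (fun w (hw : 0 < w) => by positivity) (tendsto_neg_exp_neg_mul_pow_succ_atTop k ht)]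
  simp

theorem arctan_cos_div_sin {θ : ℝ} (h₀ : 0 < θ) (hπ : θ < π) :
    arctan (cos θ / sin θ) = π / 2 - θ := by
  rw [← inv_div, ← tan_eq_sin_div_cos, ← tan_pi_div_two_sub]
  exact arctan_tan (by linarith) (by linarith)

theorem integral_norm_exp_neg_mul_mul_sin_div_Ioi_comp_mul_right {w : ℝ} (a b : ℝ)
    (hw : 0 < w) :
    ∫ x in Ioi 0, ‖exp (-b * x * w) * sin (a * x * w) / x‖ =
      ∫ x in Ioi 0, ‖exp (-b * x) * sin (a * x) / x‖ := by
  have := integral_comp_mul_right_Ioi' (fun x => ‖exp (-b * x) * sin (a * x) / x‖) 0 hw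
  rw [zero_mul, smul_eq_mul, ← integral_const_mul] at this
  rw [← this]
  refine integral_congr_ae (.of_forall fun x => ?_)
  simp only [norm_div, norm_mul, norm_of_nonneg hw.le, mul_assoc]
  field_simp

theorem integral_one_div_mul_integral_exp_neg_mul_mul_sin_mul {b : ℝ} (hb : 0 < b) (a : ℝ)
    {ρ : ℝ → ℝ} (hρ : IntegrableOn ρ (Ioi 0)) :
    ∫ x in Ioi 0, 1 / (π * x) * ∫ w in Ioi 0, exp (-b * x * w) * sin (a * x * w) * ρ w
      = arctan (a / b) / π * ∫ w in Ioi 0, ρ w := by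
  set k : ℝ → ℝ → ℝ := fun x w => exp (-b * x * w) * sin (a * x * w) / x with hk_def
  set F : ℝ → ℝ → ℝ := fun x w => π⁻¹ * (k x w * ρ w) with hF_def
  have hk_rescale (w : ℝ) : (k · w) = fun x => exp (-(b * w) * x) * sin ((a * w) * x) / x := by
    ext x; simp only [hk_def]; ring_nf
  have hk_int {w : ℝ} (hw : 0 < w) : IntegrableOn (k · w) (Ioi 0) := by
    rw [hk_rescale]; exact integrableOn_exp_neg_mul_mul_sin_div_Ioi (mul_pos hb hw) _
  have hk_integral {w : ℝ} (hw : 0 < w) : ∫ x in Ioi 0, k x w = arctan (a / b) := by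
    rw [hk_rescale, integral_exp_neg_mul_mul_sin_div_Ioi (mul_pos hb hw),
      mul_div_mul_right _ _ hw.ne']
  set C := ∫ x in Ioi 0, ‖exp (-b * x) * sin (a * x) / x‖
  have hF_norm {w : ℝ} (hw : 0 < w) : ∫ x in Ioi 0, ‖F x w‖ = π⁻¹ * C * ‖ρ w‖ := by
    simp only [hF_def, norm_mul, norm_inv, norm_of_nonneg pi_pos.le, integral_const_mul,
      integral_mul_const, hk_def, integral_norm_exp_neg_mul_mul_sin_div_Ioi_comp_mul_right a b hw]
    ring
  have hF : Integrable (Function.uncurry F)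
      ((volume.restrict (Ioi 0)).prod (volume.restrict (Ioi 0))) := by
    have hmeas : AEStronglyMeasurable (Function.uncurry F)
        ((volume.restrict (Ioi 0)).prod (volume.restrict (Ioi 0))) :=
      aestronglyMeasurable_const.mul <| (by fun_prop : Measurable (Function.uncurry k))
        |>.aestronglyMeasurable.mul hρ.aestronglyMeasurable.comp_snd
    refine (integrable_prod_iff' hmeas).2 ⟨?_, ?_⟩
    · filter_upwards [ae_restrict_mem measurableSet_Ioi] with w hw
      exact ((hk_int hw).mul_const (ρ w)).const_mul π⁻¹
    · refine (hρ.norm.const_mul (π⁻¹ * C)).congr ?_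
      filter_upwards [ae_restrict_mem measurableSet_Ioi] with w hw
      exact (hF_norm hw).symm
  calc ∫ x in Ioi 0, 1 / (π * x) * ∫ w in Ioi 0, exp (-b * x * w) * sin (a * x * w) * ρ w
      = ∫ x in Ioi 0, ∫ w in Ioi 0, F x w := by
        refine integral_congr_ae (.of_forall fun x => ?_)
        simp only [hF_def, hk_def, ← integral_const_mul]
        congr 1 with w
        ring
    _ = ∫ w in Ioi 0, ∫ x in Ioi 0, F x w := integral_integral_swap hF
    _ = ∫ w in Ioi 0, arctan (a / b) / π * ρ w := by
        refine setIntegral_congr_fun measurableSet_Ioi fun w hw => ?_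
        simp only [hF_def, integral_const_mul, integral_mul_const, hk_integral hw]
        ring
    _ = arctan (a / b) / π * ∫ w in Ioi 0, ρ w := integral_const_mul _ _

theorem odd_order_halfline_mass_general (n : ℕ) (t : ℝ) (ht : 0 < t) :
    ∫ x in Set.Ioi (0:ℝ), (1 / (Real.pi * x)) *
      ∫ w in Set.Ioi (0:ℝ),
        Real.exp (-(Real.sin (Real.pi / (2 * (2 * n + 1)))) * x * w) *
          Real.sin ((Real.cos (Real.pi / (2 * (2 * n + 1)))) * x * w) *
          ((2 * n + 1) * t * w ^ (2 * n) * Real.exp (-t * w ^ (2 * n + 1)))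
      = (1 / 2) * (1 - 1 / (2 * n + 1)) := by
  set θ := π / (2 * (2 * n + 1)) with hθ
  have hθ₀ : 0 < θ := by positivity
  have hθπ : θ < π := by
    rw [hθ, div_lt_iff₀ (by positivity)]
    nlinarith [pi_pos, (n.cast_nonneg : (0 : ℝ) ≤ n)]
  have hmass := integral_succ_mul_pow_mul_exp_neg_mul_pow_succ (2 * n) ht
  have hint := integrableOn_succ_mul_pow_mul_exp_neg_mul_pow_succ (2 * n) ht
  push_cast at hmass hint
  rw [integral_one_div_mul_integral_exp_neg_mul_mul_sin_mul (sin_pos_of_pos_of_lt_pi hθ₀ hθπ) _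
    hint, hmass, arctan_cos_div_sin hθ₀ hθπ, hθ]
  field_simp

theorem odd_order_halfline_mass (n : ℕ) (hn : 1 ≤ n) (t : ℝ) (ht : 0 < t) :
    ∫ x in Set.Ioi (0:ℝ), (1 / (Real.pi * x)) *
      ∫ w in Set.Ioi (0:ℝ),
        Real.exp (-(Real.sin (Real.pi / (2 * (2 * n + 1)))) * x * w) *
          Real.sin ((Real.cos (Real.pi / (2 * (2 * n + 1)))) * x * w) *
          ((2 * n + 1) * t * w ^ (2 * n) * Real.exp (-t * w ^ (2 * n + 1)))
      = (1 / 2) * (1 - 1 / (2 * n + 1)) :=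
  odd_order_halfline_mass_general n t ht
end

section
/- For x ≠ 0, the Airy function satisfies Ai(w) = (1/(wπ)) ∫_0^∞ e^{−z} e^{−(3z)^{1/3} w/2} sin((3^{5/6}/2) z^{1/3} w) dz, where Ai(w) = (3^{−2/3}/π) ∑_{k≥0} (3^{1/3} w)^k sin(2π(k+1)/3) Γ((k+1)/3)/k!. -/
/-! With `u = (3z)^{1/3} w`, the kernel is `e^{-z} Im e^{u ω}` for `ω = e^{2πi/3}`, i.e.
`e^{-z} ∑ u^k sin(2πk/3) / k!`. Since `|u|` only grows like `z^{1/3}`, the series is dominated by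
the integrable `e^{-z} e^{|u|}`, so it may be integrated term by term; `e^{-z} z^{k/3}` integrates
to `Γ(k/3 + 1) = (k/3) Γ(k/3)`. The `k = 0` term vanishes, and after the shift `k ↦ k + 1` what
remains is `wπ` times the power series of `Ai`. -/

open Real MeasureTheory

/-- The Airy function defined by its everywhere-convergent power series. -/
noncomputable def airyAi (w : ℝ) : ℝ :=
  (3 ^ (-(2:ℝ)/3) / Real.pi) *
    ∑' k : ℕ, (3 ^ ((1:ℝ)/3) * w) ^ k * Real.sin (2 * Real.pi * (k + 1) / 3) *
      Real.Gamma ((k + 1) / 3) / (Nat.factorial k)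

open Set
open scoped Nat

theorem hasSum_pow_mul_sin_div_factorial (u θ : ℝ) :
    HasSum (fun k : ℕ => u ^ k * sin (k * θ) / k !) (exp (u * cos θ) * sin (u * sin θ)) := by
  have h := Complex.hasSum_im
    (NormedSpace.expSeries_div_hasSum_exp ((u : ℂ) * Complex.exp (θ * Complex.I)))
  rw [← Complex.exp_eq_exp_ℂ, Complex.exp_im] at h
  convert h using 1
  · funext k
    rw [mul_pow, ← Complex.exp_nat_mul, ← mul_assoc, ← Complex.ofReal_pow,
      ← Complex.ofReal_natCast, ← Complex.ofReal_mul, Complex.div_natCast_im,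
      Complex.im_ofReal_mul, Complex.exp_ofReal_mul_I_im]
  · simp [Complex.exp_ofReal_mul_I_re, Complex.exp_ofReal_mul_I_im]

theorem integral_exp_neg_mul_rpow_pow {p : ℝ} (hp : 0 ≤ p) (k : ℕ) :
    ∫ z in Ioi (0:ℝ), exp (-z) * (z ^ p) ^ k = Gamma (p * k + 1) := by
  rw [Gamma_eq_integral (by positivity)]
  refine setIntegral_congr_fun measurableSet_Ioi fun z hz => ?_
  rw [← rpow_natCast, ← rpow_mul (le_of_lt hz), add_sub_cancel_right]

theorem integrableOn_exp_neg_mul_exp_mul_rpow_third (b : ℝ) :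
    IntegrableOn (fun z => exp (-z) * exp (b * z ^ ((1:ℝ)/3))) (Ioi 0) := by
  have hmaj : IntegrableOn (fun z => exp (b ^ 2 + 1) * exp (-(1/2) * z)) (Ioi 0) :=
    (exp_neg_integrableOn_Ioi 0 (by norm_num)).const_mul _
  refine hmaj.mono' (Continuous.aestronglyMeasurable (by fun_prop (disch := norm_num)))
    ((ae_restrict_mem measurableSet_Ioi).mono fun z (hz : 0 < z) => ?_)
  -- with `t = z^{1/3}`: `b t ≤ b² + t²/4 ≤ b² + 1 + t³/2`
  set t := z ^ ((1:ℝ)/3)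
  have ht : 0 ≤ t := by positivity
  have hcube : t ^ 3 = z := by
    rw [← rpow_natCast, ← rpow_mul hz.le]; norm_num
  rw [Real.norm_of_nonneg (by positivity), ← exp_add, ← exp_add, exp_le_exp]
  nlinarith [sq_nonneg (b - t / 2), mul_nonneg ht (sq_nonneg (t - 1))]

noncomputable def airyKernel (w z : ℝ) : ℝ :=
  exp (-z) * exp (-(3 * z) ^ ((1:ℝ)/3) * w / 2) * sin (3 ^ ((5:ℝ)/6) / 2 * z ^ ((1:ℝ)/3) * w)

noncomputable def airyKernelTerm (w : ℝ) (k : ℕ) (z : ℝ) : ℝ :=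
  sin (k * (2 * π / 3)) * (3 ^ ((1:ℝ)/3) * w) ^ k / k ! * (exp (-z) * (z ^ ((1:ℝ)/3)) ^ k)

theorem airyKernel_eq_exp_neg_mul_exp_mul_sin {w z : ℝ} (hz : 0 ≤ z) :
    airyKernel w z = exp (-z) * (exp (3 ^ ((1:ℝ)/3) * w * z ^ ((1:ℝ)/3) * cos (2 * π / 3)) *
      sin (3 ^ ((1:ℝ)/3) * w * z ^ ((1:ℝ)/3) * sin (2 * π / 3))) := by
  have hcos : cos (2 * π / 3) = -(1 / 2) := by
    rw [show 2 * π / 3 = π - π / 3 by ring, cos_pi_sub, cos_pi_div_three]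
  have hsin : sin (2 * π / 3) = 3 ^ ((1:ℝ)/2) / 2 := by
    rw [show 2 * π / 3 = π - π / 3 by ring, sin_pi_sub, sin_pi_div_three, sqrt_eq_rpow]
  have h56 : (3:ℝ) ^ ((5:ℝ)/6) = 3 ^ ((1:ℝ)/3) * 3 ^ ((1:ℝ)/2) := by
    rw [← rpow_add (by norm_num)]; norm_num
  rw [airyKernel, hcos, hsin, h56, mul_rpow (by norm_num) hz]
  ring_nf

theorem hasSum_airyKernelTerm (w : ℝ) {z : ℝ} (hz : 0 ≤ z) :
    HasSum (fun k => airyKernelTerm w k z) (airyKernel w z) := by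
  rw [airyKernel_eq_exp_neg_mul_exp_mul_sin hz]
  refine ((hasSum_pow_mul_sin_div_factorial (3 ^ ((1:ℝ)/3) * w * z ^ ((1:ℝ)/3))
    (2 * π / 3)).mul_left (exp (-z))).congr_fun fun k => ?_
  simp only [airyKernelTerm, mul_pow]
  ring

theorem norm_airyKernelTerm_le (w : ℝ) (k : ℕ) {z : ℝ} (hz : 0 ≤ z) :
    ‖airyKernelTerm w k z‖ ≤
      exp (-z) * ((|3 ^ ((1:ℝ)/3) * w| * z ^ ((1:ℝ)/3)) ^ k / k !) := by
  have hsin : |sin (k * (2 * π / 3))| ≤ 1 := abs_sin_le_one _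
  rw [airyKernelTerm, Real.norm_eq_abs, abs_mul, abs_div, abs_mul, abs_pow, Nat.abs_cast,
    abs_of_nonneg (by positivity : 0 ≤ exp (-z) * (z ^ ((1:ℝ)/3)) ^ k), mul_pow]
  calc _ ≤ 1 * |3 ^ ((1:ℝ)/3) * w| ^ k / k ! * (exp (-z) * (z ^ ((1:ℝ)/3)) ^ k) := by gcongr
    _ = _ := by ring

theorem hasSum_integral_airyKernelTerm (w : ℝ) :
    HasSum (fun k => ∫ z in Ioi 0, airyKernelTerm w k z) (∫ z in Ioi 0, airyKernel w z) := by
  let b := |3 ^ ((1:ℝ)/3) * w|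
  have hasSum_bound : ∀ z, HasSum (fun k => exp (-z) * ((b * z ^ ((1:ℝ)/3)) ^ k / k !))
      (exp (-z) * exp (b * z ^ ((1:ℝ)/3))) := fun z => by
    have := NormedSpace.expSeries_div_hasSum_exp (b * z ^ ((1:ℝ)/3))
    rw [← exp_eq_exp_ℝ] at this
    exact this.mul_left _
  have hmeas : ∀ k, Continuous (airyKernelTerm w k) := fun k => by
    unfold airyKernelTerm; fun_prop (disch := norm_num)
  refine hasSum_integral_of_dominated_convergence
    (fun k z => exp (-z) * ((b * z ^ ((1:ℝ)/3)) ^ k / k !))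
    (fun k => (hmeas k).aestronglyMeasurable)
    (fun k => (ae_restrict_mem measurableSet_Ioi).mono fun z (hz : 0 < z) =>
      norm_airyKernelTerm_le w k hz.le)
    (ae_of_all _ fun z => (hasSum_bound z).summable) ?_
    ((ae_restrict_mem measurableSet_Ioi).mono fun z (hz : 0 < z) => hasSum_airyKernelTerm w hz.le)
  simp only [fun z => (hasSum_bound z).tsum_eq]
  exact integrableOn_exp_neg_mul_exp_mul_rpow_third b

theorem integral_airyKernelTerm (w : ℝ) (k : ℕ) :
    ∫ z in Ioi 0, airyKernelTerm w k z
      = sin (k * (2 * π / 3)) * (3 ^ ((1:ℝ)/3) * w) ^ k / k ! * Gamma (k / 3 + 1) := by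
  simp only [airyKernelTerm]
  rw [integral_const_mul, integral_exp_neg_mul_rpow_pow (by norm_num)]
  ring_nf

theorem integral_airyKernelTerm_succ (w : ℝ) (k : ℕ) :
    ∫ z in Ioi 0, airyKernelTerm w (k + 1) z
      = w * 3 ^ (-(2:ℝ)/3) * ((3 ^ ((1:ℝ)/3) * w) ^ k * sin (2 * π * (k + 1) / 3) *
          Gamma ((k + 1) / 3) / k !) := by
  have h3 : (3:ℝ) ^ ((1:ℝ)/3) = 3 * 3 ^ (-(2:ℝ)/3) := by
    rw [← rpow_one_add' (by norm_num) (by norm_num)]; norm_num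
  rw [integral_airyKernelTerm, Nat.cast_add_one, Gamma_add_one (by positivity),
    Nat.factorial_succ, pow_succ, h3]
  push_cast
  field_simp

theorem airy_integral_rep (w : ℝ) (hw : w ≠ 0) :
    airyAi w = (1 / (w * Real.pi)) *
      ∫ z in Set.Ioi (0:ℝ),
        Real.exp (-z) * Real.exp (-(3 * z) ^ ((1:ℝ)/3) * w / 2) *
          Real.sin (3 ^ ((5:ℝ)/6) / 2 * z ^ ((1:ℝ)/3) * w) := by
  have hsum := hasSum_integral_airyKernelTerm w
  rw [← hasSum_nat_add_iff' 1] at hsum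
  simp only [integral_airyKernelTerm_succ, Finset.sum_range_one, integral_airyKernelTerm,
    CharP.cast_eq_zero, zero_mul, sin_zero, zero_div, sub_zero] at hsum
  change airyAi w = 1 / (w * π) * ∫ z in Ioi 0, airyKernel w z
  rw [airyAi, ← hsum.tsum_eq, tsum_mul_left]
  field_simp
end
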